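/- arXiv:2204.03449 — 6 statements merged into one kernel-verified Lean document; each statement's English description precedes it below -/
import Mathlib

section
/- If A is a column competent tensor of order m and dimension n, then every principal subtensor of A is also a column competent tensor. -/
open Finset

/-- Action of an order-(k+1) tensor: `(A x^k)_i = ∑_α A i α * ∏_j x (α j)`. -/
def tmul {ι : Type*} [Fintype ι] {k : ℕ} (A : ι → (Fin k → ι) → ℝ) (x : ι → ℝ) : ι → ℝ :=
  fun i => ∑ α : Fin k → ι, A i α * ∏ j, x (α j)

/-- A tensor is column competent if `x_i (A x^{m-1})_i = 0` for all `i` implies `A x^{m-1} = 0`. -/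
def ColumnCompetent {ι : Type*} [Fintype ι] {k : ℕ} (A : ι → (Fin k → ι) → ℝ) : Prop :=
  ∀ x : ι → ℝ, (∀ i, x i * tmul A x i = 0) → tmul A x = 0

/-- A matrix is column competent if `z_i (M z)_i = 0` for all `i` implies `M z = 0`. -/
def MatColumnCompetent {ι : Type*} [Fintype ι] (M : Matrix ι ι ℝ) : Prop :=
  ∀ z : ι → ℝ, (∀ i, z i * M.mulVec z i = 0) → M.mulVec z = 0

/-- A tensor is column adequate if `x_i (A x^{m-1})_i ≤ 0` for all `i` implies `A x^{m-1} = 0`. -/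
def ColumnAdequate {ι : Type*} [Fintype ι] {k : ℕ} (A : ι → (Fin k → ι) → ℝ) : Prop :=
  ∀ x : ι → ℝ, (∀ i, x i * tmul A x i ≤ 0) → tmul A x = 0

/-- A tensor is nondegenerate if `x_i (A x^{m-1})_i = 0` for all `i` implies `x = 0`. -/
def Nondegenerate' {ι : Type*} [Fintype ι] {k : ℕ} (A : ι → (Fin k → ι) → ℝ) : Prop :=
  ∀ x : ι → ℝ, (∀ i, x i * tmul A x i = 0) → x = 0
/-- Every principal subtensor of a column competent tensor is column competent. -/
theorem principal_subtensor_columnCompetent {n k : ℕ}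
    (A : Fin n → (Fin k → Fin n) → ℝ) (hA : ColumnCompetent A) (J : Finset (Fin n)) :
    ColumnCompetent (fun (i : {i // i ∈ J}) (α : Fin k → {i // i ∈ J}) =>
      A i.1 (fun j => (α j).1)) := by
  intro x hx
  classical
  set y : Fin n → ℝ := fun i => if h : i ∈ J then x ⟨i, h⟩ else 0 with hy
  -- the extension map on multi-indices
  set e : (Fin k → {i // i ∈ J}) → (Fin k → Fin n) := fun α j => (α j).1 with he
  have hinj : ∀ a ∈ (univ : Finset (Fin k → {i // i ∈ J})), ∀ b ∈ univ,
      e a = e b → a = b := by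
    intro a _ b _ h
    funext j
    exact Subtype.ext (congrFun h j)
  have key : ∀ i : Fin n, tmul A y i =
      ∑ α : Fin k → {i // i ∈ J}, A i (fun j => (α j).1) * ∏ j, x (α j) := by
    intro i
    unfold tmul
    rw [← Finset.sum_subset (Finset.subset_univ ((univ : Finset (Fin k → {i // i ∈ J})).image e))
        ?_, Finset.sum_image hinj]
    · apply Finset.sum_congr rfl
      intro α _
      congr 1
      apply Finset.prod_congr rfl
      intro j _
      simp [hy, he, (α j).2]
    · intro α _ hα
      have : ¬ ∀ j, α j ∈ J := by
        intro hall
        exact hα (Finset.mem_image.mpr ⟨fun j => ⟨α j, hall j⟩, Finset.mem_univ _, rfl⟩)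
      push_neg at this
      obtain ⟨j, hj⟩ := this
      have : y (α j) = 0 := by simp [hy, hj]
      rw [Finset.prod_eq_zero (Finset.mem_univ j) this, mul_zero]
  have hAy : tmul A y = 0 := by
    apply hA
    intro i
    by_cases h : i ∈ J
    · have hyi : y i = x ⟨i, h⟩ := by simp [hy, h]
      rw [hyi, key i]
      exact hx ⟨i, h⟩
    · have : y i = 0 := by simp [hy, h]
      rw [this, zero_mul]
  funext i
  have := congrFun hAy i.1
  rw [key i.1] at this
  simpa [tmul] using this
end

section
/- Let A be an order-m dimension-n tensor and let P = diag(p_1,...,p_n), Q = diag(q_1,...,q_n) be diagonal matrices with all p_i, q_i nonzero. Then A is column competent if and only if PAQ is column competent, where PAQ is the tensor with entries p_{i1} a_{i1...im} q_{i2}···q_{im}. -/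
open Finset

lemma tmul_scale {n k : ℕ} (A : Fin n → (Fin k → Fin n) → ℝ) (p q : Fin n → ℝ)
    (x : Fin n → ℝ) (i : Fin n) :
    tmul (fun i (α : Fin k → Fin n) => p i * A i α * ∏ j, q (α j)) x i
      = p i * tmul A (fun t => q t * x t) i := by
  simp only [tmul, Finset.mul_sum]
  refine Finset.sum_congr rfl fun α _ => ?_
  rw [Finset.prod_mul_distrib]
  ring

/-- `A` is column competent iff `P A Q` is, for nonsingular diagonal `P`, `Q`. -/
theorem columnCompetent_iff_diag_scaling {n k : ℕ}
    (A : Fin n → (Fin k → Fin n) → ℝ) (p q : Fin n → ℝ)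
    (hp : ∀ i, p i ≠ 0) (hq : ∀ i, q i ≠ 0) :
    ColumnCompetent A ↔
      ColumnCompetent (fun i (α : Fin k → Fin n) => p i * A i α * ∏ j, q (α j)) := by
  constructor
  · intro hA x hx
    have h : tmul A (fun t => q t * x t) = 0 := by
      apply hA
      intro i
      have := hx i
      rw [tmul_scale A p q x i] at this
      have h2 : x i * tmul A (fun t => q t * x t) i = 0 := by
        rcases mul_eq_zero.mp this with h | h
        · rw [h]; ring
        · rcases mul_eq_zero.mp h with h | h
          · exact absurd h (hp i)
          · rw [h]; ring
      calc q i * x i * tmul A (fun t => q t * x t) i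
          = q i * (x i * tmul A (fun t => q t * x t) i) := by ring
        _ = 0 := by rw [h2]; ring
    funext i
    rw [tmul_scale A p q x i, h]
    simp
  · intro hB x hx
    set z : Fin n → ℝ := fun t => x t / q t with hz
    have hqz : (fun t => q t * z t) = x := by
      funext t; simp only [hz]; exact mul_div_cancel₀ _ (hq t)
    have h : tmul (fun i (α : Fin k → Fin n) => p i * A i α * ∏ j, q (α j)) z = 0 := by
      apply hB
      intro i
      rw [tmul_scale A p q z i, hqz]
      have := hx i
      have : z i * (p i * tmul A x i) = (p i / q i) * (x i * tmul A x i) := by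
        field_simp [hz]; ring
      rw [this, hx i]; ring
    funext i
    have := congrFun h i
    rw [tmul_scale A p q z i, hqz] at this
    simpa using (mul_eq_zero.mp this).resolve_left (hp i)
end

section
/- If A is a column competent tensor of order m and dimension n and D is any diagonal matrix of order n, then DAD is a column competent tensor. -/
open Finset

/-- If `A` is column competent and `D` is any diagonal matrix, then `D A D` is column competent. -/
theorem columnCompetent_DAD {n k : ℕ}
    (A : Fin n → (Fin k → Fin n) → ℝ) (hA : ColumnCompetent A) (d : Fin n → ℝ) :
    ColumnCompetent (fun i (α : Fin k → Fin n) => d i * A i α * ∏ j, d (α j)) :=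
  by
  intro x hx
  set y : Fin n → ℝ := fun i => d i * x i with hy
  have key : ∀ i, tmul (fun i (α : Fin k → Fin n) => d i * A i α * ∏ j, d (α j)) x i
      = d i * tmul A y i := by
    intro i
    simp only [tmul, Finset.mul_sum]
    refine Finset.sum_congr rfl fun α _ => ?_
    simp only [hy]
    rw [Finset.prod_mul_distrib]
    ring
  have hAy : tmul A y = 0 := by
    apply hA
    intro i
    have := hx i
    rw [key i] at this
    simpa [hy, mul_comm, mul_assoc, mul_left_comm] using this
  funext i
  rw [key i, hAy]
  simp
end

section
/- Let A ∈ T_{m,n} be a row diagonal tensor with m even. Then A is column competent if and only if its majorization matrix M(A) (with M(A)_{ij} = a_{ijj...j}) is a column competent matrix. -/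
open Finset

lemma odd_root_exists {k : ℕ} (hk : Odd k) (z : ℝ) : ∃ x : ℝ, x ^ k = z := by
  rcases lt_trichotomy z 0 with h | h | h
  · refine ⟨-((-z) ^ ((k : ℝ)⁻¹)), ?_⟩
    have hz : (0:ℝ) ≤ -z := by linarith
    have hkne : (k : ℝ) ≠ 0 := Nat.cast_ne_zero.mpr hk.pos.ne'
    rw [hk.neg_pow, ← Real.rpow_natCast ((-z) ^ ((k:ℝ)⁻¹)) k,
      ← Real.rpow_mul hz, inv_mul_cancel₀ hkne, Real.rpow_one]
    ring
  · exact ⟨0, by rw [h, zero_pow hk.pos.ne']⟩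
  · refine ⟨z ^ ((k : ℝ)⁻¹), ?_⟩
    have hkne : (k : ℝ) ≠ 0 := Nat.cast_ne_zero.mpr hk.pos.ne'
    rw [← Real.rpow_natCast (z ^ ((k:ℝ)⁻¹)) k, ← Real.rpow_mul h.le,
      inv_mul_cancel₀ hkne, Real.rpow_one]

lemma tmul_eq_sum_pow {n k : ℕ} (hk : Odd k)
    (A : Fin n → (Fin k → Fin n) → ℝ)
    (hdiag : ∀ i (α : Fin k → Fin n), A i α ≠ 0 → ∀ j j', α j = α j')
    (x : Fin n → ℝ) (i : Fin n) :
    tmul A x i = ∑ j, A i (fun _ => j) * x j ^ k := by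
  have i0 : Fin k := ⟨0, hk.pos⟩
  unfold tmul
  rw [← Finset.sum_fiberwise univ (fun α => α i0) (fun α => A i α * ∏ j, x (α j))]
  refine Finset.sum_congr rfl fun j _ => ?_
  rw [Finset.sum_eq_single (fun _ => j)]
  · rw [Finset.prod_const, Finset.card_univ, Fintype.card_fin]
  · intro α hα hne
    by_cases hA : A i α = 0
    · simp [hA]
    · exfalso
      apply hne
      funext j'
      have := hdiag i α hA j' i0
      simp only [mem_filter] at hα
      rw [this, hα.2]
  · intro h
    simp at h

/-- For an even-order row diagonal tensor `A`, `A` is column competent iff its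
majorization matrix `M(A)` is a column competent matrix. -/
theorem rowDiagonal_columnCompetent_iff {n k : ℕ} (hord : Even (k + 1))
    (A : Fin n → (Fin k → Fin n) → ℝ)
    (hdiag : ∀ i (α : Fin k → Fin n), A i α ≠ 0 → ∀ j j', α j = α j') :
    ColumnCompetent A ↔
      MatColumnCompetent (Matrix.of fun i j : Fin n => A i (fun _ => j)) := by
  have hk : Odd k := by
    rcases Nat.even_or_odd k with h | h
    · exact absurd hord (by simpa [Nat.even_add_one] using h)
    · exact h
  set M : Matrix (Fin n) (Fin n) ℝ := Matrix.of fun i j : Fin n => A i (fun _ => j) with hM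
  have hkey : ∀ (x : Fin n → ℝ), tmul A x = M.mulVec (fun j => x j ^ k) := by
    intro x
    funext i
    rw [tmul_eq_sum_pow hk A hdiag x i]
    rfl
  constructor
  · intro hA z hz
    choose x hx using fun j => odd_root_exists hk (z j)
    have hxz : (fun j => x j ^ k) = z := funext hx
    have h1 : ∀ i, x i * tmul A x i = 0 := by
      intro i
      rcases mul_eq_zero.mp (hz i) with h | h
      · have hxk : x i ^ k = 0 := by rw [hx i, h]
        rw [pow_eq_zero_iff hk.pos.ne'] at hxk
        rw [hxk, zero_mul]
      · rw [hkey, hxz, h, mul_zero]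
    have := hA x h1
    rw [hkey, hxz] at this
    exact this
  · intro hMc x hx
    have h1 : ∀ i, (fun j => x j ^ k) i * M.mulVec (fun j => x j ^ k) i = 0 := by
      intro i
      rcases mul_eq_zero.mp (hx i) with h | h
      · simp only
        rw [h, zero_pow hk.pos.ne', zero_mul]
      · rw [← hkey, h, mul_zero]
    have := hMc _ h1
    rw [hkey]
    exact this
end

section
/- Let M(A) ∈ ℝ^{n×n}, B ∈ ℝ^{(N-n)×(N-n)} blocks and consider the block matrix Ā = [[M(A), B],[O, O]] ∈ ℝ^{N×N}. Then Ā is a column competent matrix if and only if M(A) is a column competent matrix and B = O. -/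
open Finset

/-- The block matrix `Ā = [[M, B], [O, O]]` is column competent iff `M` is column
competent and `B = O`. -/
theorem block_matrix_columnCompetent_iff {n r : ℕ}
    (M : Matrix (Fin n) (Fin n) ℝ) (B : Matrix (Fin n) (Fin r) ℝ) :
    MatColumnCompetent (Matrix.fromBlocks M B 0 0) ↔
      MatColumnCompetent M ∧ B = 0 := by
  constructor
  · intro h
    constructor
    · intro x hx
      have hz := h (Sum.elim x 0) ?_
      · funext i
        have := congrFun hz (Sum.inl i)
        simpa [Matrix.fromBlocks_mulVec] using this
      · rintro (i | j)
        · simpa [Matrix.fromBlocks_mulVec] using hx i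
        · simp [Matrix.fromBlocks_mulVec]
    · ext i j
      have hz := h (Sum.elim 0 (fun k => if k = j then 1 else 0)) ?_
      · have := congrFun hz (Sum.inl i)
        simpa [Matrix.fromBlocks_mulVec, Matrix.mulVec, dotProduct,
          Finset.sum_ite_eq'] using this
      · rintro (i | k)
        · simp [Matrix.fromBlocks_mulVec]
        · simp [Matrix.fromBlocks_mulVec]
  · rintro ⟨hM, rfl⟩
    intro z hz
    funext i
    rcases i with i | j
    · have hx : ∀ i, (z ∘ Sum.inl) i * M.mulVec (z ∘ Sum.inl) i = 0 := by
        intro i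
        have := hz (Sum.inl i)
        simpa [Matrix.fromBlocks_mulVec, Matrix.mulVec, dotProduct,
          Function.comp] using this
      have := congrFun (hM (z ∘ Sum.inl) hx) i
      simpa [Matrix.fromBlocks_mulVec, Matrix.mulVec, dotProduct,
        Function.comp] using this
    · simp [Matrix.fromBlocks_mulVec, Matrix.mulVec, dotProduct]
end

section
/- Let M ∈ ℝ^{n×n} be a column competent matrix and J ⊆ [n]. Then the principal submatrix M_{JJ} is a column competent matrix. -/
open Finset

/-- Every principal submatrix of a column competent matrix is column competent. -/
theorem principal_submatrix_columnCompetent {n : ℕ}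
    (M : Matrix (Fin n) (Fin n) ℝ) (hM : MatColumnCompetent M) (J : Finset (Fin n)) :
    MatColumnCompetent (M.submatrix (fun i : {i // i ∈ J} => i.1)
      (fun j : {j // j ∈ J} => j.1)) := by
  intro z hz
  set z' : Fin n → ℝ := fun i => if h : i ∈ J then z ⟨i, h⟩ else 0 with hz'
  have key : ∀ i : {i // i ∈ J},
      (M.submatrix (fun i : {i // i ∈ J} => i.1) (fun j : {j // j ∈ J} => j.1)).mulVec z i
        = M.mulVec z' i.1 := by
    intro i
    simp only [Matrix.mulVec, Matrix.submatrix_apply, dotProduct]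
    rw [show (∑ x : Fin n, M i.1 x * z' x) = ∑ j ∈ J, M i.1 j * z' j from
        (Finset.sum_subset J.subset_univ (by intro j _ hj; simp [hz', hj])).symm,
      Finset.sum_subtype J (fun _ => Iff.rfl) (fun j => M i.1 j * z' j)]
    apply Finset.sum_congr rfl
    intro j _
    congr 1
    simp only [hz', dif_pos j.2]
  have hall : ∀ i, z' i * M.mulVec z' i = 0 := by
    intro i
    by_cases h : i ∈ J
    · have := hz ⟨i, h⟩
      rw [key ⟨i, h⟩] at this
      simpa [hz', h] using this
    · simp [hz', h]
  have := hM z' hall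
  funext i
  rw [key i, this]
  rfl
end
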